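/- Let ρ, σ be well agreeing near weights on an F-algebra R with good basis {f_i}. Then σ(f_i) = 0 if and only if i ∈ H(ρ) = {m : (m,0) ∈ H(ρ,σ)}. Consequently, i is a gap of H(ρ) if and only if σ(f_i) is a gap of H(σ), so H(ρ) and H(σ) have the same genus. -/

import Mathlib

/-!
If `σ(fᵢ) > 0` were also the `σ`-value of some `g` with `ρ(g) < i`, axiom (N4) for `σ` would
give `fᵢ - c • g` with `ρ`-value `i` and smaller `σ`-value, contradicting the minimality of
`σ(fᵢ)`. This forces `σ(fᵢ) = 0` exactly when `i ∈ H(ρ)`, and makes `i ↦ σ(fᵢ)` an injection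
from the gaps of `H(ρ)` into the gaps of `H(σ)`. Good bases exist for `(σ, ρ)` as well, since
`H(σ, ρ)` is the mirror image of `H(ρ, σ)`, so the two genera bound each other.
-/

/-- A near order (n-order) function on an `F`-algebra `R`: axioms (N0)–(N4). -/
def IsNearOrder (F : Type*) {R : Type*} [Field F] [CommRing R] [Algebra F R]
    (ρ : R → WithBot ℕ) : Prop :=
  (∀ f : R, ρ f = ⊥ ↔ f = 0) ∧
  (∀ (c : F) (f : R), c ≠ 0 → ρ (c • f) = ρ f) ∧
  (∀ f g : R, ρ (f + g) ≤ max (ρ f) (ρ g)) ∧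
  (∀ f g h : R, ρ f < ρ g → ρ (f * h) ≤ ρ (g * h)) ∧
  (∀ f g h : R, ρ f < ρ g → ρ 1 < ρ h → ρ (f * h) < ρ (g * h)) ∧
  (∀ f g : R, ρ f = ρ g → ρ 1 < ρ f → ρ 1 < ρ g →
    ∃ c : F, c ≠ 0 ∧ ρ (f - c • g) < ρ f)

/-- A near weight function: a normal near order function satisfying (N5).
Normality: `ρ` takes the value `0` on all nonzero elements of
`U_ρ = {f : ρ(f) ≤ ρ(1)}`, and `gcd ρ(M_ρ) = 1` (every common divisor of the
values of `ρ` on `M_ρ = {f : ρ(f) > ρ(1)}` is `1`, provided `M_ρ ≠ ∅`). -/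
def IsNearWeight (F : Type*) {R : Type*} [Field F] [CommRing R] [Algebra F R]
    (ρ : R → WithBot ℕ) : Prop :=
  IsNearOrder F ρ ∧
  (∀ f : R, f ≠ 0 → ρ f ≤ ρ 1 → ρ f = 0) ∧
  ((∃ f : R, ρ 1 < ρ f) →
    ∀ d : ℕ, (∀ f : R, ρ 1 < ρ f → (d : ℕ) ∣ WithBot.unbotD 0 (ρ f)) → d = 1) ∧
  (∀ f g : R, ρ (f * g) ≤ ρ f + ρ g) ∧
  (∀ f g : R, ρ 1 < ρ f → ρ 1 < ρ g → ρ (f * g) = ρ f + ρ g)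

/-- The semigroup `H(ρ,σ) = {(ρ(f), σ(f)) : f ∈ R \ {0}} ⊆ ℕ²`. -/
def Hset {R : Type*} [CommRing R] (ρ σ : R → WithBot ℕ) : Set (ℕ × ℕ) :=
  {p : ℕ × ℕ | ∃ f : R, f ≠ 0 ∧ ρ f = (p.1 : WithBot ℕ) ∧ σ f = (p.2 : WithBot ℕ)}

section GoodBasis

variable {F R : Type*} [Field F] [CommRing R] [Algebra F R] {ρ σ : R → WithBot ℕ}

lemma mem_Hset_swap {a b : ℕ} : (a, b) ∈ Hset σ ρ ↔ (b, a) ∈ Hset ρ σ :=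
  ⟨fun ⟨g, hg, h₁, h₂⟩ => ⟨g, hg, h₂, h₁⟩, fun ⟨g, hg, h₁, h₂⟩ => ⟨g, hg, h₂, h₁⟩⟩

lemma finite_compl_Hset_swap (hfin : {p : ℕ × ℕ | p ∉ Hset ρ σ}.Finite) :
    {p : ℕ × ℕ | p ∉ Hset σ ρ}.Finite :=
  (hfin.preimage Prod.swap_injective.injOn).subset fun _ hp => mt mem_Hset_swap.mpr hp

lemma finite_gaps_snd (hfin : {p : ℕ × ℕ | p ∉ Hset ρ σ}.Finite) (a : ℕ) :
    {b : ℕ | (a, b) ∉ Hset ρ σ}.Finite :=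
  hfin.preimage fun _ _ _ _ h => (Prod.ext_iff.mp h).2

lemma exists_mem_Hset_of_finite_compl (hfin : {p : ℕ × ℕ | p ∉ Hset ρ σ}.Finite) (a : ℕ) :
    ∃ b, (a, b) ∈ Hset ρ σ := by
  obtain ⟨b, hb⟩ := (finite_gaps_snd hfin a).infinite_compl.nonempty
  exact ⟨b, not_not.mp hb⟩

lemma nontrivial_of_finite_compl_Hset (hfin : {p : ℕ × ℕ | p ∉ Hset ρ σ}.Finite) :
    Nontrivial R :=
  have ⟨_, g, hg, _⟩ := exists_mem_Hset_of_finite_compl hfin 0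
  nontrivial_of_ne g 0 hg

namespace IsNearOrder

lemma eq_bot_iff (hρ : IsNearOrder F ρ) {g : R} : ρ g = ⊥ ↔ g = 0 := hρ.1 g

lemma map_smul (hρ : IsNearOrder F ρ) {c : F} (hc : c ≠ 0) (g : R) : ρ (c • g) = ρ g :=
  hρ.2.1 c g hc

lemma map_add_le (hρ : IsNearOrder F ρ) (g h : R) : ρ (g + h) ≤ max (ρ g) (ρ h) :=
  hρ.2.2.1 g h

lemma exists_sub_smul_lt (hρ : IsNearOrder F ρ) {g h : R} (hgh : ρ g = ρ h) (hg : ρ 1 < ρ g)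
    (hh : ρ 1 < ρ h) : ∃ c : F, c ≠ 0 ∧ ρ (g - c • h) < ρ g :=
  hρ.2.2.2.2.2 g h hgh hg hh

lemma map_neg (hρ : IsNearOrder F ρ) (g : R) : ρ (-g) = ρ g := by
  simpa using hρ.map_smul (neg_ne_zero.mpr one_ne_zero) g

lemma map_sub_of_lt (hρ : IsNearOrder F ρ) {g h : R} (hlt : ρ h < ρ g) :
    ρ (g - h) = ρ g := by
  have hle : ρ (g - h) ≤ ρ g := by
    simpa [sub_eq_add_neg, hρ.map_neg, hlt.le] using hρ.map_add_le g (-h)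
  have hge : ρ g ≤ max (ρ (g - h)) (ρ h) := by simpa using hρ.map_add_le (g - h) h
  exact le_antisymm hle ((le_max_iff.mp hge).resolve_right hlt.not_ge)

end IsNearOrder

lemma IsNearWeight.map_one [Nontrivial R] (hρ : IsNearWeight F ρ) : ρ 1 = 0 :=
  hρ.2.1 1 one_ne_zero le_rfl

structure IsGoodBasis (ρ σ : R → WithBot ℕ) (f : ℕ → R) : Prop where
  apply_zero : f 0 = 1
  fst_apply_of_one_le : ∀ i : ℕ, 1 ≤ i → ρ (f i) = (i : WithBot ℕ)
  snd_apply_le : ∀ i : ℕ, 1 ≤ i → ∀ h : R, ρ h = (i : WithBot ℕ) → σ (f i) ≤ σ h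

lemma exists_isGoodBasis (hfin : {p : ℕ × ℕ | p ∉ Hset ρ σ}.Finite) :
    ∃ f : ℕ → R, IsGoodBasis ρ σ f := by
  have hmin (i : ℕ) :
      ∃ g, ρ g = (i : WithBot ℕ) ∧ ∀ h, ρ h = (i : WithBot ℕ) → σ g ≤ σ h := by
    obtain ⟨_, g, -, hg, -⟩ := exists_mem_Hset_of_finite_compl hfin i
    obtain ⟨g', hg', hmin⟩ :=
      (InvImage.wf σ wellFounded_lt).has_min {h | ρ h = (i : WithBot ℕ)} ⟨g, hg⟩
    exact ⟨g', hg', fun h hh => not_lt.mp (hmin h hh)⟩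
  choose g hg using hmin
  refine ⟨fun i => if i = 0 then 1 else g i, rfl, fun i hi => ?_, fun i hi => ?_⟩
  · simpa [Nat.one_le_iff_ne_zero.mp hi] using (hg i).1
  · simpa [Nat.one_le_iff_ne_zero.mp hi] using (hg i).2

namespace IsGoodBasis

variable {f : ℕ → R}

lemma snd_apply_le_snd_one (hb : IsGoodBasis ρ σ f) (hρ : IsNearOrder F ρ)
    (hσ : IsNearOrder F σ) {i : ℕ} (hi : 1 ≤ i) {g : R} (hg : ρ g < (i : WithBot ℕ))
    (hσg : σ g = σ (f i)) : σ (f i) ≤ σ 1 := by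
  by_contra! hpos
  obtain ⟨c, hc, hlt⟩ := hσ.exists_sub_smul_lt hσg.symm hpos (hσg ▸ hpos)
  have hρ_sub : ρ (f i - c • g) = (i : WithBot ℕ) := by
    rw [← hb.fst_apply_of_one_le i hi] at hg ⊢
    exact hρ.map_sub_of_lt (by rwa [hρ.map_smul hc g])
  exact (hb.snd_apply_le i hi _ hρ_sub).not_gt hlt

variable [Nontrivial R]

lemma fst_apply (hb : IsGoodBasis ρ σ f) (hρ : IsNearWeight F ρ) (i : ℕ) :
    ρ (f i) = (i : WithBot ℕ) := by
  rcases Nat.eq_zero_or_pos i with rfl | hi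
  · simpa [hb.apply_zero] using hρ.map_one
  · exact hb.fst_apply_of_one_le i hi

lemma apply_ne_zero (hb : IsGoodBasis ρ σ f) (hρ : IsNearWeight F ρ) (i : ℕ) : f i ≠ 0 := by
  intro h
  have := hb.fst_apply hρ i
  rw [h, hρ.1.eq_bot_iff.mpr rfl] at this
  exact WithBot.bot_ne_coe this

lemma exists_snd_apply_eq (hb : IsGoodBasis ρ σ f) (hρ : IsNearWeight F ρ)
    (hσ : IsNearOrder F σ) (i : ℕ) : ∃ t : ℕ, σ (f i) = (t : WithBot ℕ) :=
  WithBot.ne_bot_iff_exists.mp (mt hσ.eq_bot_iff.mp (hb.apply_ne_zero hρ i)) |>.imp fun _ => Eq.symm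

lemma zero_le_snd_apply (hb : IsGoodBasis ρ σ f) (hρ : IsNearWeight F ρ)
    (hσ : IsNearOrder F σ) (i : ℕ) : (0 : WithBot ℕ) ≤ σ (f i) := by
  obtain ⟨t, ht⟩ := hb.exists_snd_apply_eq hρ hσ i
  rw [ht]
  exact_mod_cast t.zero_le

lemma snd_apply_eq_zero_iff (hb : IsGoodBasis ρ σ f) (hρ : IsNearWeight F ρ)
    (hσ : IsNearWeight F σ) (i : ℕ) : σ (f i) = (0 : WithBot ℕ) ↔ (i, 0) ∈ Hset ρ σ := by
  refine ⟨fun h => ⟨f i, hb.apply_ne_zero hρ i, hb.fst_apply hρ i, by simpa using h⟩, ?_⟩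
  rintro ⟨h, -, hρh, hσh⟩
  rcases Nat.eq_zero_or_pos i with rfl | hi
  · simpa [hb.apply_zero] using hσ.map_one
  · exact le_antisymm ((hb.snd_apply_le i hi h hρh).trans (by simp [hσh]))
      (hb.zero_le_snd_apply hρ hσ.1 i)

lemma snd_apply_eq_zero_of_lt (hb : IsGoodBasis ρ σ f) (hρ : IsNearWeight F ρ)
    (hσ : IsNearWeight F σ) {i : ℕ} (hi : 1 ≤ i) {g : R} (hg : ρ g < (i : WithBot ℕ))
    (hσg : σ g = σ (f i)) : σ (f i) = (0 : WithBot ℕ) :=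
  le_antisymm (hσ.map_one ▸ hb.snd_apply_le_snd_one hρ.1 hσ.1 hi hg hσg)
    (hb.zero_le_snd_apply hρ hσ.1 i)

lemma notMem_Hset_iff (hb : IsGoodBasis ρ σ f) (hρ : IsNearWeight F ρ)
    (hσ : IsNearWeight F σ) (i : ℕ) :
    (i, 0) ∉ Hset ρ σ ↔ ∃ t : ℕ, σ (f i) = (t : WithBot ℕ) ∧ (0, t) ∉ Hset ρ σ := by
  have hzero : ((0 : ℕ), (0 : ℕ)) ∈ Hset ρ σ := (hb.snd_apply_eq_zero_iff hρ hσ 0).mp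
    (by simpa [hb.apply_zero] using hσ.map_one)
  constructor
  · intro hgap
    obtain ⟨t, ht⟩ := hb.exists_snd_apply_eq hρ hσ.1 i
    have hi : 1 ≤ i := Nat.one_le_iff_ne_zero.mpr (by rintro rfl; exact hgap hzero)
    refine ⟨t, ht, fun ⟨h, _, hρh, hσh⟩ => hgap ?_⟩
    refine (hb.snd_apply_eq_zero_iff hρ hσ i).mp
      (hb.snd_apply_eq_zero_of_lt hρ hσ hi (g := h) ?_ ?_)
    · rw [hρh]; exact_mod_cast hi
    · rw [hσh, ht]
  · rintro ⟨t, ht, hgap⟩ hmem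
    rw [← hb.snd_apply_eq_zero_iff hρ hσ, ht] at hmem
    obtain rfl : t = 0 := by exact_mod_cast hmem
    exact hgap hzero

lemma injOn_snd_apply (hb : IsGoodBasis ρ σ f) (hρ : IsNearWeight F ρ)
    (hσ : IsNearWeight F σ) :
    Set.InjOn (fun i => σ (f i)) {i : ℕ | (i, 0) ∉ Hset ρ σ} := by
  have key {i j : ℕ} (hj : (j, 0) ∉ Hset ρ σ) (hij : i < j) (h : σ (f i) = σ (f j)) : False :=
    hj <| (hb.snd_apply_eq_zero_iff hρ hσ j).mp <|
      hb.snd_apply_eq_zero_of_lt hρ hσ (by omega) (by rw [hb.fst_apply hρ]; exact_mod_cast hij) h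
  intro i hi j hj h
  rcases lt_trichotomy i j with hij | hij | hij
  · exact (key hj hij h).elim
  · exact hij
  · exact (key hi hij h.symm).elim

end IsGoodBasis

lemma ncard_gaps_fst_le (hρ : IsNearWeight F ρ) (hσ : IsNearWeight F σ)
    (hfin : {p : ℕ × ℕ | p ∉ Hset ρ σ}.Finite) :
    {i : ℕ | (i, 0) ∉ Hset ρ σ}.ncard ≤ {t : ℕ | (0, t) ∉ Hset ρ σ}.ncard := by
  have := nontrivial_of_finite_compl_Hset hfin
  obtain ⟨f, hb⟩ := exists_isGoodBasis hfin
  refine Set.ncard_le_ncard_of_injOn (fun i => (σ (f i)).unbotD 0) (fun i hi => ?_)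
    (fun i hi j hj h => hb.injOn_snd_apply hρ hσ hi hj ?_) (finite_gaps_snd hfin 0)
  · obtain ⟨t, ht, hgap⟩ := (hb.notMem_Hset_iff hρ hσ i).mp hi
    simpa [ht] using hgap
  · obtain ⟨s, hs⟩ := hb.exists_snd_apply_eq hρ hσ.1 i
    obtain ⟨t, ht⟩ := hb.exists_snd_apply_eq hρ hσ.1 j
    simp only [hs, ht] at h ⊢
    simpa using h

lemma ncard_gaps_fst_eq (hρ : IsNearWeight F ρ) (hσ : IsNearWeight F σ)
    (hfin : {p : ℕ × ℕ | p ∉ Hset ρ σ}.Finite) :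
    {i : ℕ | (i, 0) ∉ Hset ρ σ}.ncard = {t : ℕ | (0, t) ∉ Hset ρ σ}.ncard := by
  refine le_antisymm (ncard_gaps_fst_le hρ hσ hfin) ?_
  simpa only [mem_Hset_swap] using ncard_gaps_fst_le hσ hρ (finite_compl_Hset_swap hfin)

end GoodBasis

theorem stmt_16_general {F R : Type*} [Field F] [CommRing R] [Algebra F R]
    (ρ σ : R → WithBot ℕ) (hρ : IsNearWeight F ρ) (hσ : IsNearWeight F σ)
    (hfin : {p : ℕ × ℕ | p ∉ Hset ρ σ}.Finite)
    (f : ℕ → R) (hf0 : f 0 = 1)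
    (hf : ∀ i : ℕ, 1 ≤ i → ρ (f i) = (i : WithBot ℕ))
    (hmin : ∀ i : ℕ, 1 ≤ i → ∀ h : R, ρ h = (i : WithBot ℕ) → σ (f i) ≤ σ h) :
    (∀ i : ℕ, σ (f i) = (0 : WithBot ℕ) ↔ (i, 0) ∈ Hset ρ σ) ∧
    (∀ i : ℕ, (i, 0) ∉ Hset ρ σ ↔
      ∃ t : ℕ, σ (f i) = (t : WithBot ℕ) ∧ (0, t) ∉ Hset ρ σ) ∧
    {i : ℕ | (i, 0) ∉ Hset ρ σ}.ncard = {t : ℕ | (0, t) ∉ Hset ρ σ}.ncard := by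
  have := nontrivial_of_finite_compl_Hset hfin
  have hb : IsGoodBasis ρ σ f := ⟨hf0, hf, hmin⟩
  exact ⟨hb.snd_apply_eq_zero_iff hρ hσ, hb.notMem_Hset_iff hρ hσ,
    ncard_gaps_fst_eq hρ hσ hfin⟩

/-- `σ(f_i) = 0` iff `i ∈ H(ρ)`; `i` is a gap of `H(ρ)` iff
`σ(f_i)` is a gap of `H(σ)`; consequently `H(ρ)` and `H(σ)` have the same genus. -/
theorem stmt_16 {F R : Type*} [Field F] [CommRing R] [Algebra F R]
    (ρ σ : R → WithBot ℕ) (hρ : IsNearWeight F ρ) (hσ : IsNearWeight F σ)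
    (hfin : {p : ℕ × ℕ | p ∉ Hset ρ σ}.Finite)
    (hU : {h : R | ρ h ≤ ρ 1} ∩ {h : R | σ h ≤ σ 1} = Set.range (algebraMap F R))
    (f : ℕ → R) (hf0 : f 0 = 1)
    (hf : ∀ i : ℕ, 1 ≤ i → ρ (f i) = (i : WithBot ℕ))
    (hmin : ∀ i : ℕ, 1 ≤ i → ∀ h : R, ρ h = (i : WithBot ℕ) → σ (f i) ≤ σ h) :
    (∀ i : ℕ, σ (f i) = (0 : WithBot ℕ) ↔ (i, 0) ∈ Hset ρ σ) ∧
    (∀ i : ℕ, (i, 0) ∉ Hset ρ σ ↔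
      ∃ t : ℕ, σ (f i) = (t : WithBot ℕ) ∧ (0, t) ∉ Hset ρ σ) ∧
    {i : ℕ | (i, 0) ∉ Hset ρ σ}.ncard = {t : ℕ | (0, t) ∉ Hset ρ σ}.ncard :=
  stmt_16_general ρ σ hρ hσ hfin f hf0 hf hmin
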